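/- Under Assumptions A1, A2 and the cone condition A4, for any sequence λ_n ∈ (0,1] with λ_n ↓ 0, the regularized value functions are uniformly bounded: sup_{n∈ℕ, t∈𝕋, u∈W} |V^{λ_n}(t,u)| < ∞. -/

import Mathlib

open MeasureTheory Filter Topology
open scoped NNReal ENNReal

/-- Borel subprobability measures on `E` with the topology of weak convergence. -/
abbrev SubProb (E : Type*) [MeasurableSpace E] : Type _ :=
  {μ : FiniteMeasure E // μ Set.univ ≤ 1}

/-- Assumption A4 (cone condition) for a set `A ⊆ ℝ^ℓ`: there are `ϑ > 0` and `ι ∈ (0,π/2]`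
such that every `a ∈ A` is the vertex of a cone of angle `ι` whose intersection with the
ball `B_ϑ(a)` lies in `A` (for `ℓ = 1` the cone is a half-line, so this reduces to
`[a-ϑ,a] ⊆ A` or `[a,a+ϑ] ⊆ A`). -/
def ConeCondition {l : ℕ} (Aset : Set (EuclideanSpace ℝ (Fin l))) : Prop :=
  ∃ θ : ℝ, 0 < θ ∧ ∃ ι : ℝ, 0 < ι ∧ ι ≤ Real.pi / 2 ∧
    ∀ a ∈ Aset, ∃ v : EuclideanSpace ℝ (Fin l), ‖v‖ = 1 ∧
      {x : EuclideanSpace ℝ (Fin l) |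
        dist x a < θ ∧ ‖x - a‖ * Real.cos ι ≤ (inner ℝ (x - a) v : ℝ)} ⊆ Aset

section Regularized

variable {l : ℕ} {S W S0 : Type*}
variable [MetricSpace S] [CompactSpace S] [Nonempty S]
  [MeasurableSpace S] [BorelSpace S] [SecondCountableTopology S]
variable [Fintype W] [Nonempty W]
variable (T : ℕ) (Aset : Set (EuclideanSpace ℝ (Fin l)))
variable (Ψ : ℕ → W → S0)
variable (f0 : ℕ → S0 → EuclideanSpace ℝ (Fin l) → SubProb S → ℝ)
variable (P0 : ℕ → W → EuclideanSpace ℝ (Fin l) → SubProb S → W → ℝ)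
variable (g0 : S0 → SubProb S → ℝ)
variable (μT : W → SubProb S) (m : ℕ → W → SubProb S)

/-- `Vaux λ j u` is the regularized value function `V^λ(T-j, u)`, defined by backward
induction (`j` = number of remaining periods) via the explicit log-integral form of the
entropy-regularized dynamic programming equation:
`V^λ(t,u) = λ ln ∫_A exp((f⁰_t(Ψ_t(u),a,m_t(u)) + Σ_{u'} V^λ(t+1,u') P⁰_{t+1}(u,a,m_t(u),u'))/λ) da`,
with terminal value `V^λ(T,u) = g⁰(Ψ_T(u),μ_T(u))`. -/
noncomputable def Vaux (lam : ℝ) : ℕ → W → ℝ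
  | 0, u => g0 (Ψ T u) (μT u)
  | (j + 1), u =>
      lam * Real.log (∫ a in Aset,
        Real.exp ((f0 (T - (j + 1)) (Ψ (T - (j + 1)) u) a (m (T - (j + 1)) u)
          + ∑ u' : W, Vaux lam j u' * P0 (T - (j + 1)) u a (m (T - (j + 1)) u) u') / lam))

/-- The regularized value function `V^λ(t,u)` at calendar time `t`. -/
noncomputable def Vlam (lam : ℝ) (t : ℕ) (u : W) : ℝ :=
  Vaux T Aset Ψ f0 P0 g0 μT m lam (T - t) u

/-- The Gibbs exponent
`G^λ_t(u,a) = f⁰_t(Ψ_t(u),a,m_t(u)) + Σ_{u'} V^λ(t+1,u') P⁰_{t+1}(u,a,m_t(u),u')`. -/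
noncomputable def Gexp (lam : ℝ) (t : ℕ) (u : W) (a : EuclideanSpace ℝ (Fin l)) : ℝ :=
  f0 t (Ψ t u) a (m t u)
    + ∑ u' : W, Vlam T Aset Ψ f0 P0 g0 μT m lam (t + 1) u' * P0 t u a (m t u) u'

/-- The Gibbs-form optimal regularized control: the density on `A`
`α^λ_t(u)(a) = exp(G^λ_t(u,a)/λ) / ∫_A exp(G^λ_t(u,a')/λ) da'`. -/
noncomputable def gibbsDensity (lam : ℝ) (t : ℕ) (u : W) (a : EuclideanSpace ℝ (Fin l)) : ℝ :=
  Real.exp (Gexp T Aset Ψ f0 P0 g0 μT m lam t u a / lam) /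
    ∫ a' in Aset, Real.exp (Gexp T Aset Ψ f0 P0 g0 μT m lam t u a' / lam)

/-- The (differential) Shannon entropy of the Gibbs density:
`H(α^λ_t(u)) = -∫_A α^λ_t(u)(a) ln α^λ_t(u)(a) da`. -/
noncomputable def entGibbs (lam : ℝ) (t : ℕ) (u : W) : ℝ :=
  -∫ a in Aset, gibbsDensity T Aset Ψ f0 P0 g0 μT m lam t u a *
      Real.log (gibbsDensity T Aset Ψ f0 P0 g0 μT m lam t u a)

end Regularized

/-! Each backward step writes `V^λ(t,u) = λ log ∫_A exp(G/λ)` with a Gibbs exponent `G` bounded on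
`A` by `sup |f⁰_t| + sup |V^λ(t+1,·)|` (the transition weights form a probability vector). Trapping
the integrand between `exp(∓B/λ)` gives `|λ log ∫_A exp(G/λ) - λ log |A|| ≤ B`, so for `λ ≤ 1`
each step adds at most `sup |f⁰_t| + |log |A||` to the bound, uniformly in `λ ∈ (0,1]`. -/

open Real

theorem exists_forall_norm_le_of_continuousOn {ι X E : Type*} [Finite ι] [TopologicalSpace X]
    [SeminormedAddGroup E] {K : Set X} (hK : IsCompact K) {f : ι → X → E}
    (hf : ∀ i, ContinuousOn (f i) K) : ∃ C, ∀ i, ∀ x ∈ K, ‖f i x‖ ≤ C := by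
  choose C hC using fun i => hK.exists_bound_of_continuousOn (hf i)
  obtain ⟨M, hM⟩ := Finite.exists_le C
  exact ⟨M, fun i x hx => (hC i x hx).trans (hM i)⟩

theorem abs_sum_mul_le_of_sum_eq_one {ι : Type*} (s : Finset ι) {v p : ι → ℝ} {C : ℝ}
    (hv : ∀ i ∈ s, |v i| ≤ C) (hp : ∀ i ∈ s, 0 ≤ p i) (hsum : ∑ i ∈ s, p i = 1) :
    |∑ i ∈ s, v i * p i| ≤ C :=
  calc |∑ i ∈ s, v i * p i| ≤ ∑ i ∈ s, |v i * p i| := Finset.abs_sum_le_sum_abs _ _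
    _ ≤ ∑ i ∈ s, C * p i := Finset.sum_le_sum fun i hi => by
        rw [abs_mul, abs_of_nonneg (hp i hi)]
        exact mul_le_mul_of_nonneg_right (hv i hi) (hp i hi)
    _ = C := by rw [← Finset.mul_sum, hsum, mul_one]

section LogIntegralExp

variable {α : Type*} [MeasurableSpace α] {μ : Measure α} {s : Set α}

theorem abs_log_setIntegral_exp_sub_log_measureReal_le (hs : MeasurableSet s) (hμ0 : μ s ≠ 0)
    (hμ : μ s ≠ ∞) {g : α → ℝ} (hg : IntegrableOn (fun a => exp (g a)) s μ) {B : ℝ}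
    (hB : ∀ a ∈ s, |g a| ≤ B) :
    |log (∫ a in s, exp (g a) ∂μ) - log (μ.real s)| ≤ B := by
  have hv : 0 < μ.real s := ENNReal.toReal_pos hμ0 hμ
  have setIntegral_exp_const (c : ℝ) : ∫ _ in s, exp c ∂μ = exp c * μ.real s := by
    rw [setIntegral_const, smul_eq_mul, mul_comm]
  have hlow : exp (-B) * μ.real s ≤ ∫ a in s, exp (g a) ∂μ := by
    rw [← setIntegral_exp_const]
    exact setIntegral_mono_on (integrableOn_const hμ) hg hs fun a ha =>
      exp_le_exp.2 (neg_le_of_abs_le (hB a ha))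
  have hup : ∫ a in s, exp (g a) ∂μ ≤ exp B * μ.real s := by
    rw [← setIntegral_exp_const]
    exact setIntegral_mono_on hg (integrableOn_const hμ) hs fun a ha =>
      exp_le_exp.2 (le_of_abs_le (hB a ha))
  have hlog_low := log_le_log (by positivity) hlow
  have hlog_up := log_le_log ((by positivity : 0 < exp (-B) * μ.real s).trans_le hlow) hup
  rw [log_mul (exp_ne_zero _) hv.ne', log_exp] at hlog_low hlog_up
  rw [abs_le]
  constructor <;> linarith

theorem abs_mul_log_setIntegral_exp_div_le (hs : MeasurableSet s) (hμ0 : μ s ≠ 0)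
    (hμ : μ s ≠ ∞) {lam : ℝ} (hlam : lam ∈ Set.Ioc (0 : ℝ) 1) {G : α → ℝ}
    (hG : IntegrableOn (fun a => exp (G a / lam)) s μ) {B : ℝ} (hB : ∀ a ∈ s, |G a| ≤ B) :
    |lam * log (∫ a in s, exp (G a / lam) ∂μ)| ≤ B + |log (μ.real s)| := by
  obtain ⟨hlam0, hlam1⟩ := hlam
  set L := log (∫ a in s, exp (G a / lam) ∂μ)
  have hL : |L - log (μ.real s)| ≤ B / lam :=
    abs_log_setIntegral_exp_sub_log_measureReal_le hs hμ0 hμ hG fun a ha => by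
      rw [abs_div, abs_of_pos hlam0]
      exact div_le_div_of_nonneg_right (hB a ha) hlam0.le
  calc |lam * L| = |lam * (L - log (μ.real s)) + lam * log (μ.real s)| := by ring_nf
    _ ≤ |lam * (L - log (μ.real s))| + |lam * log (μ.real s)| := abs_add_le _ _
    _ = lam * |L - log (μ.real s)| + lam * |log (μ.real s)| := by
        rw [abs_mul, abs_mul, abs_of_pos hlam0]
    _ ≤ lam * (B / lam) + 1 * |log (μ.real s)| := by gcongr
    _ = B + |log (μ.real s)| := by field_simp

end LogIntegralExp

section ValueFunctionBound

variable {l : ℕ} {S W S0 : Type*} [MeasurableSpace S] [Fintype W] (T : ℕ)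
  {Aset : Set (EuclideanSpace ℝ (Fin l))} (Ψ : ℕ → W → S0)
  {f0 : ℕ → S0 → EuclideanSpace ℝ (Fin l) → SubProb S → ℝ}
  {P0 : ℕ → W → EuclideanSpace ℝ (Fin l) → SubProb S → W → ℝ}
  (g0 : S0 → SubProb S → ℝ) (μT : W → SubProb S) (m : ℕ → W → SubProb S)

theorem exists_forall_abs_Vaux_le (hA : IsCompact Aset) (hvol : 0 < volume Aset)
    (hf : ∀ t x mm, ContinuousOn (fun a => f0 t x a mm) Aset)
    (hP : ∀ t u u' mm, ContinuousOn (fun a => P0 t u a mm u') Aset)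
    (hPnonneg : ∀ t u a mm u', 0 ≤ P0 t u a mm u') (hPsum : ∀ t u a mm, ∑ u', P0 t u a mm u' = 1)
    (j : ℕ) : ∃ C, ∀ lam ∈ Set.Ioc (0 : ℝ) 1, ∀ u,
      |Vaux T Aset Ψ f0 P0 g0 μT m lam j u| ≤ C := by
  induction j with
  | zero =>
    obtain ⟨C, hC⟩ := Finite.exists_le fun u => |g0 (Ψ T u) (μT u)|
    exact ⟨C, fun _ _ u => hC u⟩
  | succ j ih =>
    obtain ⟨C, hC⟩ := ih
    set t := T - (j + 1)
    obtain ⟨Mf, hMf⟩ := exists_forall_norm_le_of_continuousOn hA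
      fun u => hf t (Ψ t u) (m t u)
    refine ⟨Mf + C + |log (volume.real Aset)|, fun lam hlam u => ?_⟩
    have hG : ContinuousOn (fun a => f0 t (Ψ t u) a (m t u)
        + ∑ u', Vaux T Aset Ψ f0 P0 g0 μT m lam j u' * P0 t u a (m t u) u') Aset :=
      (hf _ _ _).add (continuousOn_finsetSum _ fun u' _ => continuousOn_const.mul (hP _ _ _ _))
    refine abs_mul_log_setIntegral_exp_div_le hA.measurableSet hvol.ne' hA.measure_lt_top.ne hlam
      ((continuous_exp.comp_continuousOn (hG.div_const lam)).integrableOn_compact hA)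
      fun a ha => (abs_add_le _ _).trans (add_le_add ?_ ?_)
    · simpa only [Real.norm_eq_abs] using hMf u a ha
    · exact abs_sum_mul_le_of_sum_eq_one _ (fun u' _ => hC lam hlam u')
        (fun u' _ => hPnonneg _ _ _ _ _) (hPsum _ _ _ _)

end ValueFunctionBound

theorem regularized_value_functions_uniformly_bounded_general
    {l : ℕ} {S W S0 : Type*}
    [MeasurableSpace S]
    [Fintype W]
    (T : ℕ)
    (Aset : Set (EuclideanSpace ℝ (Fin l)))
    (hAcompact : IsCompact Aset)
    (hALeb : 0 < MeasureTheory.volume Aset)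
    (Ψ : ℕ → W → S0)
    (f0 : ℕ → S0 → EuclideanSpace ℝ (Fin l) → SubProb S → ℝ)
    (P0 : ℕ → W → EuclideanSpace ℝ (Fin l) → SubProb S → W → ℝ)
    (g0 : S0 → SubProb S → ℝ)
    (hP0range : ∀ t u a mm u', P0 t u a mm u' ∈ Set.Icc (0 : ℝ) 1)
    (hP0sum : ∀ t u a mm, (∑ u' : W, P0 t u a mm u') = 1)
    (hP0Lip : ∃ K : NNReal, ∀ t u u' mm,
      LipschitzOnWith K (fun a => P0 t u a mm u') Aset)
    (hf0Lip : ∃ K : NNReal, ∀ t x mm, LipschitzOnWith K (fun a => f0 t x a mm) Aset)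
    (μT : W → SubProb S) (m : ℕ → W → SubProb S)
    -- the vanishing sequence of regularization parameters, λ_n ∈ (0,1], λ_n ↓ 0
    (lam : ℕ → ℝ) (hmem : ∀ n, lam n ∈ Set.Ioc (0 : ℝ) 1) :
    ∃ C : ℝ, ∀ (n : ℕ), ∀ t ≤ T, ∀ u : W,
      |Vlam T Aset Ψ f0 P0 g0 μT m (lam n) t u| ≤ C := by
  obtain ⟨Kf, hKf⟩ := hf0Lip
  obtain ⟨KP, hKP⟩ := hP0Lip
  choose C hC using exists_forall_abs_Vaux_le T Ψ g0 μT m hAcompact hALeb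
    (fun t x mm => (hKf t x mm).continuousOn) (fun t u u' mm => (hKP t u u' mm).continuousOn)
    (fun t u a mm u' => (hP0range t u a mm u').1) hP0sum
  obtain ⟨M, hM⟩ := Finite.exists_le fun j : Fin (T + 1) => C j
  exact ⟨M, fun n t ht u => (hC (T - t) (lam n) (hmem n) u).trans (hM ⟨T - t, by omega⟩)⟩

/-- Under Assumptions A1, A2 and the cone condition A4, for any sequence
`λ_n ∈ (0,1]` with `λ_n ↓ 0`, the regularized value functions are uniformly bounded:
`sup_{n, t ∈ 𝕋, u ∈ W} |V^{λ_n}(t,u)| < ∞`. -/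
theorem regularized_value_functions_uniformly_bounded
    {l : ℕ} {S W S0 : Type*}
    [MetricSpace S] [CompactSpace S] [Nonempty S]
    [MeasurableSpace S] [BorelSpace S] [SecondCountableTopology S]
    [Fintype W] [Nonempty W] [Fintype S0]
    (T : ℕ)
    (Aset : Set (EuclideanSpace ℝ (Fin l)))
    (hAcompact : IsCompact Aset) (hAne : Aset.Nonempty)
    (hALeb : 0 < MeasureTheory.volume Aset)
    (hAcone : ConeCondition Aset)
    (Ψ : ℕ → W → S0)
    (f0 : ℕ → S0 → EuclideanSpace ℝ (Fin l) → SubProb S → ℝ)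
    (P0 : ℕ → W → EuclideanSpace ℝ (Fin l) → SubProb S → W → ℝ)
    (g0 : S0 → SubProb S → ℝ)
    (hP0range : ∀ t u a mm u', P0 t u a mm u' ∈ Set.Icc (0 : ℝ) 1)
    (hP0sum : ∀ t u a mm, (∑ u' : W, P0 t u a mm u') = 1)
    (hP0cont : ∀ t u u', ContinuousOn
      (fun z : EuclideanSpace ℝ (Fin l) × SubProb S => P0 t u z.1 z.2 u')
      (Aset ×ˢ (Set.univ : Set (SubProb S))))
    (hP0Lip : ∃ K : NNReal, ∀ t u u' mm,
      LipschitzOnWith K (fun a => P0 t u a mm u') Aset)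
    (hf0cont : ∀ t x, ContinuousOn
      (fun z : EuclideanSpace ℝ (Fin l) × SubProb S => f0 t x z.1 z.2)
      (Aset ×ˢ (Set.univ : Set (SubProb S))))
    (hf0Lip : ∃ K : NNReal, ∀ t x mm, LipschitzOnWith K (fun a => f0 t x a mm) Aset)
    (hg0cont : ∀ x, Continuous fun mm : SubProb S => g0 x mm)
    (μT : W → SubProb S) (m : ℕ → W → SubProb S)
    -- the vanishing sequence of regularization parameters, λ_n ∈ (0,1], λ_n ↓ 0
    (lam : ℕ → ℝ) (hmem : ∀ n, lam n ∈ Set.Ioc (0 : ℝ) 1)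
    (hanti : Antitone lam) (hlim : Tendsto lam atTop (𝓝 (0 : ℝ))) :
    ∃ C : ℝ, ∀ (n : ℕ), ∀ t ≤ T, ∀ u : W,
      |Vlam T Aset Ψ f0 P0 g0 μT m (lam n) t u| ≤ C :=
  regularized_value_functions_uniformly_bounded_general T Aset hAcompact hALeb Ψ f0 P0 g0 hP0range
    hP0sum hP0Lip hf0Lip μT m lam hmem
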